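/- Every basic open set W(r,v,i) of the Λ-duplicate D is compact; consequently D is a locally compact space. -/

import Mathlib

/-- An element of Kurepa's tree `Λ`: an injective function `t : α → ω` with countable
ordinal domain `α` and coinfinite range.  The function is represented as a total function
on ordinals which takes the junk value `0` outside of the domain. -/
structure Lambda : Type 1 where
  toFun : Ordinal.{0} → ℕ
  dom : Ordinal.{0}
  countable : dom.card ≤ Cardinal.aleph0
  inj : ∀ β γ, β < dom → γ < dom → toFun β = toFun γ → β = γ
  coinfinite : {n : ℕ | ∀ β, β < dom → toFun β ≠ n}.Infinite
  junk : ∀ β, ¬ β < dom → toFun β = 0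

/-- The tree order on `Λ`: `s ≼ t` iff `t` extends `s`. -/
def Lambda.le (s t : Lambda) : Prop :=
  s.dom ≤ t.dom ∧ ∀ β, β < s.dom → s.toFun β = t.toFun β

/-- The strict tree order on `Λ`. -/
def Lambda.lt (s t : Lambda) : Prop := Lambda.le s t ∧ s ≠ t

/-- `r ≺ s` for `r ∈ Λ ∪ {0}` (`none` plays the role of the extra least element `0`). -/
def precLt : Option Lambda → Lambda → Prop
  | none, _ => True
  | some r, s => Lambda.lt r s

/-- The interval `(r, t] = {s ∈ Λ : r ≺ s ≼ t}`, with `r ∈ Λ ∪ {0}`. -/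
def lamIoc (r : Option Lambda) (t : Lambda) : Set Lambda :=
  {s | precLt r s ∧ Lambda.le s t}

/-- The position of the minimum of `t` on the ordinal interval `[δ, β)`. -/
noncomputable def minPos (t : Ordinal.{0} → ℕ) (δ β : Ordinal.{0}) : Ordinal.{0} :=
  sInf {ξ | δ ≤ ξ ∧ ξ < β ∧ ∀ η, δ ≤ η → η < β → t ξ ≤ t η}

lemma minPos_lt (t : Ordinal.{0} → ℕ) {δ β : Ordinal.{0}} (h : δ < β) : minPos t δ β < β := by
  have hne : {ξ : Ordinal.{0} | δ ≤ ξ ∧ ξ < β ∧ ∀ η, δ ≤ η → η < β → t ξ ≤ t η}.Nonempty := by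
    have h1 : {n : ℕ | ∃ ξ : Ordinal.{0}, δ ≤ ξ ∧ ξ < β ∧ t ξ = n}.Nonempty :=
      ⟨t δ, δ, le_refl _, h, rfl⟩
    obtain ⟨ξ, hξ1, hξ2, hξ3⟩ := Nat.sInf_mem h1
    refine ⟨ξ, hξ1, hξ2, fun η h1' h2' => ?_⟩
    rw [hξ3]
    exact Nat.sInf_le ⟨η, h1', h2', rfl⟩
  obtain ⟨ξ, hξ⟩ := hne
  calc minPos t δ β ≤ ξ := csInf_le (OrderBot.bddBelow _) hξ
    _ < β := hξ.2.1

/-- The sequence `τ` computed from the starting ordinal `β₀` downwards: `τ` is obtained by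
repeatedly passing from `β` to the position of the minimum of `t` on `[δ, β)`, stopping upon
reaching `δ`.  The resulting finite sequence `(β_k, …, β_1)` is recorded as a list in the
order `[β_k, …, β_1]` (so concatenation of the lists corresponds to `⌢`). -/
noncomputable def tauFrom (δ : Ordinal.{0}) (t : Ordinal.{0} → ℕ) : Ordinal.{0} → List Ordinal.{0} :=
  WellFounded.fix wellFounded_lt
    (fun β IH => if h : δ < β then IH (minPos t δ β) (minPos_lt t h) ++ [minPos t δ β] else [])

/-- The finite sequence `τ(s,t)` of ordinals, for `s ≼ t` in `Λ`. -/
noncomputable def tau (s t : Lambda) : List Ordinal.{0} :=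
  tauFrom s.dom t.toFun t.dom

/-- `ℓ(s,t)`, the length of `τ(s,t)`. -/
noncomputable def ell (s t : Lambda) : ℕ := (tau s t).length

/-- The underlying set of the `Λ`-duplicate: `D = Λ × {1, -1}`. -/
abbrev Dup : Type 1 := Lambda × ℤˣ

/-- The basic open sets `W(r,t,i)` of the `Λ`-duplicate. -/
noncomputable def Wset (r : Option Lambda) (t : Lambda) (i : ℤˣ) : Set Dup :=
  {q | q.1 ∈ lamIoc r t ∧ q.2 = (-1) ^ ell q.1 t * i}

/-- The collection of all basic open sets `W(r,t,i)` with `r ≺ t`. -/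
noncomputable def WBasis : Set (Set Dup) :=
  {S | ∃ (r : Option Lambda) (t : Lambda) (i : ℤˣ), precLt r t ∧ S = Wset r t i}

/-- The topology of the `Λ`-duplicate, generated by the basic sets `W(r,t,i)`. -/
noncomputable instance : TopologicalSpace Dup := TopologicalSpace.generateFrom WBasis


/-! Fix `v ∈ Λ` and `i`. The points `(v↾γ, (-1)^ℓ(v↾γ,v) i)`, `γ ≤ dom v`, depend continuously
on `γ` for the order topology of the ordinals, and `W(r,v,i)` is the image of the compact interval
`(dom r, dom v]` under this map. Continuity at `γ` needs only left neighbourhoods `(δ, γ]`, which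
are open in the ordinals. For `ξ` close enough below `γ`, injectivity of `t ⪰ v↾γ` makes `t`
exceed `t(γ)` on `[ξ, γ)`, so the `τ`-path from `t` down to `v↾ξ` passes through `v↾γ` and
`ℓ(v↾ξ, t) = ℓ(v↾ξ, v↾γ) + ℓ(v↾γ, t)`; this transports the sign condition defining `W(r,t,j)`
from `v↾γ` to `v↾ξ`. The same continuity at `γ = dom t` shows that the sets `W(r,t,i)`, `r ≺ t`,
form a neighbourhood basis at `(t,i)`, whence local compactness. -/

open Filter Topology Set

namespace Lambda

lemma ext {s t : Lambda} (hf : s.toFun = t.toFun) (hd : s.dom = t.dom) : s = t := by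
  cases s; cases t; cases hf; cases hd; rfl

lemma le_refl (s : Lambda) : s.le s := ⟨le_rfl, fun _ _ => rfl⟩

lemma le_trans {s t u : Lambda} (hst : s.le t) (htu : t.le u) : s.le u :=
  ⟨hst.1.trans htu.1, fun β hβ => (hst.2 β hβ).trans (htu.2 β (hβ.trans_le hst.1))⟩

noncomputable def trunc (v : Lambda) (γ : Ordinal.{0}) : Lambda where
  toFun β := if β < γ then v.toFun β else 0
  dom := min γ v.dom
  countable := (Ordinal.card_le_card (min_le_right _ _)).trans v.countable
  inj β β' hβ hβ' e := by
    simp only [lt_min_iff] at hβ hβ'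
    simp only [if_pos hβ.1, if_pos hβ'.1] at e
    exact v.inj β β' hβ.2 hβ'.2 e
  coinfinite := v.coinfinite.mono fun n hn β hβ => by
    rw [lt_min_iff] at hβ
    simpa only [if_pos hβ.1] using hn β hβ.2
  junk β hβ := by
    rw [lt_min_iff, not_and_or] at hβ
    split_ifs with h
    · exact v.junk β (hβ.resolve_left (not_not.2 h))
    · rfl

lemma trunc_dom (v : Lambda) (γ : Ordinal.{0}) : (v.trunc γ).dom = min γ v.dom := rfl

lemma trunc_le (v : Lambda) (γ : Ordinal.{0}) : (v.trunc γ).le v :=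
  ⟨min_le_right _ _, fun _ hβ => if_pos (hβ.trans_le (min_le_left _ _))⟩

lemma trunc_dom_of_le {s v : Lambda} (h : s.le v) : v.trunc s.dom = s := by
  refine ext (funext fun β => ?_) (min_eq_left h.1)
  by_cases hβ : β < s.dom
  · exact (if_pos hβ).trans (h.2 β hβ).symm
  · exact (if_neg hβ).trans (s.junk β hβ).symm

lemma lt_dom {s t : Lambda} (h : s.lt t) : s.dom < t.dom :=
  h.1.1.lt_of_ne fun e => h.2 <| by
    rw [← trunc_dom_of_le h.1, e, trunc_dom_of_le (le_refl t)]

lemma le_iff_dom_le_of_le {s t v : Lambda} (hs : s.le v) (ht : t.le v) :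
    s.le t ↔ s.dom ≤ t.dom :=
  ⟨fun h => h.1, fun h => ⟨h, fun β hβ => (hs.2 β hβ).trans (ht.2 β (hβ.trans_le h)).symm⟩⟩

lemma lt_iff_dom_lt_of_le {s t v : Lambda} (hs : s.le v) (ht : t.le v) :
    s.lt t ↔ s.dom < t.dom :=
  ⟨lt_dom, fun h => ⟨(le_iff_dom_le_of_le hs ht).2 h.le, fun e => h.ne (congrArg dom e)⟩⟩

end Lambda

lemma minPos_mem (t : Ordinal.{0} → ℕ) {δ β : Ordinal.{0}} (h : δ < β) :
    δ ≤ minPos t δ β ∧ minPos t δ β < β ∧ ∀ η, δ ≤ η → η < β → t (minPos t δ β) ≤ t η := by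
  obtain ⟨ξ, hδξ, hξβ, hξ⟩ := Nat.sInf_mem (s := {n | ∃ ξ, δ ≤ ξ ∧ ξ < β ∧ t ξ = n})
    ⟨t δ, δ, le_rfl, h, rfl⟩
  exact csInf_mem (s := {ξ | δ ≤ ξ ∧ ξ < β ∧ ∀ η, δ ≤ η → η < β → t ξ ≤ t η})
    ⟨ξ, hδξ, hξβ, fun η hδη hηβ => hξ ▸ Nat.sInf_le ⟨η, hδη, hηβ, rfl⟩⟩

lemma minPos_congr {t t' : Ordinal.{0} → ℕ} {δ β : Ordinal.{0}}
    (h : ∀ ξ, δ ≤ ξ → ξ < β → t ξ = t' ξ) : minPos t δ β = minPos t' δ β := by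
  unfold minPos
  congr 1
  ext ξ
  refine and_congr_right fun hδξ => and_congr_right fun hξβ => forall₃_congr fun η hδη hηβ => ?_
  rw [h ξ hδξ hξβ, h η hδη hηβ]

lemma minPos_eq_of_lt {t : Ordinal.{0} → ℕ} {δ γ β : Ordinal.{0}} (hδγ : δ ≤ γ) (hγβ : γ < β)
    (H : ∀ ξ, δ ≤ ξ → ξ < γ → t γ < t ξ) : minPos t δ β = minPos t γ β := by
  unfold minPos
  congr 1
  ext ξ
  constructor
  · rintro ⟨hδξ, hξβ, hmin⟩
    refine ⟨not_lt.1 fun hξγ => (H ξ hδξ hξγ).not_ge (hmin γ hδγ hγβ), hξβ,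
      fun η hγη => hmin η (hδγ.trans hγη)⟩
  · rintro ⟨hγξ, hξβ, hmin⟩
    refine ⟨hδγ.trans hγξ, hξβ, fun η hδη hηβ => ?_⟩
    rcases le_or_gt γ η with hγη | hηγ
    · exact hmin η hγη hηβ
    · exact (hmin γ le_rfl hγβ).trans (H η hδη hηγ).le

lemma tauFrom_eq (δ : Ordinal.{0}) (t : Ordinal.{0} → ℕ) (β : Ordinal.{0}) :
    tauFrom δ t β =
      if δ < β then tauFrom δ t (minPos t δ β) ++ [minPos t δ β] else [] := by
  rw [tauFrom, WellFounded.fix_eq, dite_eq_ite]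

lemma tauFrom_congr {t t' : Ordinal.{0} → ℕ} {δ β : Ordinal.{0}}
    (h : ∀ ξ, δ ≤ ξ → ξ < β → t ξ = t' ξ) : tauFrom δ t β = tauFrom δ t' β := by
  induction β using WellFoundedLT.induction with
  | _ β IH =>
    rw [tauFrom_eq δ t, tauFrom_eq δ t', ← minPos_congr h]
    split_ifs with hδβ
    · have hm := (minPos_mem t hδβ).2.1
      rw [IH _ hm fun ξ hδξ hξ => h ξ hδξ (hξ.trans hm)]
    · rfl

lemma tauFrom_append {t : Ordinal.{0} → ℕ} {δ γ : Ordinal.{0}} (hδγ : δ ≤ γ)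
    (H : ∀ ξ, δ ≤ ξ → ξ < γ → t γ < t ξ) {β : Ordinal.{0}} (hγβ : γ ≤ β) :
    tauFrom δ t β = tauFrom δ t γ ++ tauFrom γ t β := by
  induction β using WellFoundedLT.induction with
  | _ β IH =>
    rcases hγβ.eq_or_lt with rfl | hγβ
    · rw [tauFrom_eq γ t γ, if_neg (lt_irrefl γ), List.append_nil]
    · have hm := minPos_mem t hγβ
      rw [tauFrom_eq δ t β, if_pos (hδγ.trans_lt hγβ), tauFrom_eq γ t β, if_pos hγβ,
        minPos_eq_of_lt hδγ hγβ H, IH _ hm.2.1 hm.1, List.append_assoc]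

lemma ell_self (t : Lambda) : ell t t = 0 := by
  rw [ell, tau, tauFrom_eq, if_neg (lt_irrefl _), List.length_nil]

lemma ell_add {u s t : Lambda} (hus : u.le s) (hst : s.le t)
    (H : ∀ ξ, u.dom ≤ ξ → ξ < s.dom → t.toFun s.dom < t.toFun ξ) :
    ell u t = ell u s + ell s t := by
  have hs : tauFrom u.dom t.toFun s.dom = tau u s :=
    tauFrom_congr fun ξ _ hξ => (hst.2 ξ hξ).symm
  rw [ell, tau, tauFrom_append hus.1 H hst.1, hs, List.length_append]
  rfl

/-- By injectivity, `t` takes values `≤ N` at only finitely many points. -/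
lemma eventually_lt_toFun (t : Lambda) (N : ℕ) {γ : Ordinal.{0}} (hγ : γ ≤ t.dom) :
    ∀ᶠ ξ in 𝓝 γ, ∀ η, ξ ≤ η → η < γ → N < t.toFun η := by
  have hfin : {η | η < γ ∧ t.toFun η ≤ N}.Finite :=
    ((finite_Iic N).subset (by rintro _ ⟨η, hη, rfl⟩; exact hη.2)).of_finite_image
      fun a ha b hb => t.inj a b (ha.1.trans_le hγ) (hb.1.trans_le hγ)
  filter_upwards [hfin.eventually_all.2 fun η hη => Ioi_mem_nhds hη.1] with ξ hξ η hξη hηγ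
  by_contra! hη
  exact (hξ η ⟨hηγ, hη⟩).not_ge hξη

lemma eventually_ell_add {s t : Lambda} (hst : s.le t) :
    ∀ᶠ ξ in 𝓝 s.dom, ∀ u : Lambda, u.le s → ξ ≤ u.dom → ell u t = ell u s + ell s t := by
  filter_upwards [eventually_lt_toFun t (t.toFun s.dom) hst.1] with ξ hξ u hus hξu
  exact ell_add hus hst fun η hη hηs => hξ η (hξu.trans hη) hηs

noncomputable def branch (v : Lambda) (i : ℤˣ) (γ : Ordinal.{0}) : Dup :=
  (v.trunc γ, (-1) ^ ell (v.trunc γ) v * i)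

lemma Wset_eq_image (r : Option Lambda) (v : Lambda) (i : ℤˣ) :
    Wset r v i = branch v i '' {γ | γ ≤ v.dom ∧ precLt r (v.trunc γ)} := by
  ext q
  constructor
  · rintro ⟨⟨hrs, hsv⟩, hq⟩
    have hs := Lambda.trunc_dom_of_le hsv
    exact ⟨q.1.dom, ⟨hsv.1, by rwa [hs]⟩, Prod.ext hs (by rw [hq, branch, hs])⟩
  · rintro ⟨γ, ⟨-, hr⟩, rfl⟩
    exact ⟨⟨hr, Lambda.trunc_le v γ⟩, rfl⟩

lemma isCompact_setOf_precLt_trunc {r : Option Lambda} {v : Lambda} (hr : precLt r v) :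
    IsCompact {γ | γ ≤ v.dom ∧ precLt r (v.trunc γ)} := by
  cases r with
  | none =>
    convert isCompact_Icc (a := (0 : Ordinal.{0})) (b := v.dom) using 1
    ext γ
    simp [precLt]
  | some r =>
    convert isCompact_Icc (a := Order.succ r.dom) (b := v.dom) using 1
    ext γ
    rw [Order.Icc_succ_left, mem_Ioc, and_comm, mem_ofPred_eq, precLt,
      Lambda.lt_iff_dom_lt_of_le hr.1 (Lambda.trunc_le v γ), Lambda.trunc_dom]
    exact and_congr_right fun hγ => by rw [min_eq_left hγ]

lemma eventually_precLt_trunc {r : Option Lambda} {v : Lambda} {γ : Ordinal.{0}}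
    (h : precLt r (v.trunc γ)) : ∀ᶠ ξ in 𝓝 γ, precLt r (v.trunc ξ) := by
  cases r with
  | none => exact Eventually.of_forall fun _ => trivial
  | some r =>
    have hrv := Lambda.le_trans h.1 (Lambda.trunc_le v γ)
    have hr : r.dom < min γ v.dom := Lambda.lt_dom h
    filter_upwards [Ioi_mem_nhds (hr.trans_le (min_le_left _ _))] with ξ hξ
    exact (Lambda.lt_iff_dom_lt_of_le hrv (Lambda.trunc_le v ξ)).2
      (lt_min hξ (hr.trans_le (min_le_right _ _)))

lemma eventually_branch_mem {v t : Lambda} {r : Option Lambda} {i j : ℤˣ} {γ : Ordinal.{0}}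
    (hγ : γ ≤ v.dom) (h : branch v i γ ∈ Wset r t j) :
    ∀ᶠ ξ in 𝓝 γ, ξ ≤ v.dom → branch v i ξ ∈ Wset r t j := by
  set s := v.trunc γ
  obtain ⟨⟨hr, hst⟩, hsign⟩ :
    (precLt r s ∧ s.le t) ∧ (-1) ^ ell s v * i = (-1) ^ ell s t * j := h
  have hsv : s.le v := Lambda.trunc_le v γ
  have hs : s.dom = γ := min_eq_left hγ
  have hIic : Iic γ ∈ 𝓝 γ := SuccOrder.nhdsLE_eq_nhds γ ▸ self_mem_nhdsWithin
  have hadd_t := eventually_ell_add hst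
  have hadd_v := eventually_ell_add hsv
  rw [hs] at hadd_t hadd_v
  filter_upwards [hIic, eventually_precLt_trunc hr, hadd_t, hadd_v] with ξ hξγ hrξ ht hv hξv
  have hus : (v.trunc ξ).le s := (Lambda.le_iff_dom_le_of_le (Lambda.trunc_le v ξ) hsv).2
    (min_le_min_right _ hξγ)
  have hξ : ξ ≤ (v.trunc ξ).dom := le_min le_rfl hξv
  refine ⟨⟨hrξ, Lambda.le_trans hus hst⟩, ?_⟩
  change (-1) ^ ell (v.trunc ξ) v * i = (-1) ^ ell (v.trunc ξ) t * j
  rw [ht _ hus hξ, hv _ hus hξ, pow_add, pow_add, mul_assoc, mul_assoc, hsign]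

lemma continuousOn_branch (v : Lambda) (i : ℤˣ) : ContinuousOn (branch v i) (Iic v.dom) := by
  intro γ hγ
  rw [ContinuousWithinAt, instTopologicalSpaceDup, TopologicalSpace.tendsto_nhds_generateFrom_iff]
  rintro _ ⟨r, t, j, -, rfl⟩ h
  exact eventually_nhdsWithin_iff.2 (eventually_branch_mem hγ h)

lemma isCompact_Wset {r : Option Lambda} {v : Lambda} (hr : precLt r v) (i : ℤˣ) :
    IsCompact (Wset r v i) := by
  rw [Wset_eq_image]
  exact (isCompact_setOf_precLt_trunc hr).image_of_continuousOn
    ((continuousOn_branch v i).mono fun _ hγ => hγ.1)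

lemma isOpen_Wset {r : Option Lambda} {t : Lambda} (hr : precLt r t) (i : ℤˣ) :
    IsOpen (Wset r t i) :=
  TopologicalSpace.isOpen_generateFrom_of_mem ⟨r, t, i, hr, rfl⟩

lemma exists_precLt_of_mem_nhds (t : Lambda) {S : Set Ordinal.{0}} (hS : S ∈ 𝓝 t.dom) :
    ∃ r, precLt r t ∧ ∀ γ ≤ t.dom, precLt r (t.trunc γ) → γ ∈ S := by
  rcases eq_zero_or_pos t.dom with h0 | h0
  · refine ⟨none, trivial, fun γ hγ _ => ?_⟩
    obtain rfl : γ = t.dom := (nonpos_iff_eq_zero.1 (h0 ▸ hγ)).trans h0.symm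
    exact mem_of_mem_nhds hS
  · obtain ⟨a, ha, haS⟩ := (mem_nhdsLE_iff_exists_Ioc_subset' h0).1 (nhdsWithin_le_nhds hS)
    have hat : (t.trunc a).dom = a := min_eq_left (le_of_lt ha)
    refine ⟨some (t.trunc a), ?_, fun γ hγ haγ => haS ⟨?_, hγ⟩⟩
    · exact (Lambda.lt_iff_dom_lt_of_le (Lambda.trunc_le t a) (Lambda.le_refl t)).2
        (hat.trans_lt ha)
    · have := Lambda.lt_dom (s := t.trunc a) haγ
      rwa [hat, Lambda.trunc_dom, min_eq_left hγ] at this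

lemma branch_dom (t : Lambda) (i : ℤˣ) : branch t i t.dom = (t, i) := by
  rw [branch, Lambda.trunc_dom_of_le (Lambda.le_refl t), ell_self, pow_zero, one_mul]

lemma nhds_hasBasis_Wset (q : Dup) :
    (𝓝 q).HasBasis (fun r => precLt r q.1) (fun r => Wset r q.1 q.2) := by
  obtain ⟨t, i⟩ := q
  refine ⟨fun n => ⟨fun hn => ?_, fun ⟨r, hr, hn⟩ => mem_of_superset ?_ hn⟩⟩
  · have hcont := continuousOn_branch t i t.dom (mem_Iic.2 le_rfl)
    rw [ContinuousWithinAt, branch_dom, SuccOrder.nhdsLE_eq_nhds] at hcont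
    obtain ⟨r, hr, hS⟩ := exists_precLt_of_mem_nhds t (hcont hn)
    refine ⟨r, hr, ?_⟩
    rw [Wset_eq_image, image_subset_iff]
    exact fun γ hγ => hS γ hγ.1 hγ.2
  · refine (isOpen_Wset hr i).mem_nhds ?_
    exact ⟨⟨hr, Lambda.le_refl t⟩, by rw [ell_self, pow_zero, one_mul]⟩

/-- Every basic open set `W(r,v,i)` of the `Λ`-duplicate `D` is compact; consequently `D`
is locally compact. -/
theorem Wset_compact_and_locallyCompact :
    (∀ (r : Option Lambda) (v : Lambda) (i : ℤˣ), precLt r v → IsCompact (Wset r v i)) ∧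
    LocallyCompactSpace Dup :=
  ⟨fun _ _ i hr => isCompact_Wset hr i,
    .of_hasBasis nhds_hasBasis_Wset fun q _ hr => isCompact_Wset hr q.2⟩
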